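/- Let φ : ℝ^d → ℝ be a convex, Lipschitz continuous function with Lipschitz constant Lip(φ). Then for every η, R > 0 and q > 1, ∫_{B(0,R)} diam(∂φ(B(x,η)))^q dx ≤ c_{d,q,R,η} · Lip(φ)^q · η, where c_{d,q,R,η} = 48 d² β_d 2^{3d+q−1} (q/(q−1)) (R+4η)^{d−1}, β_d being the Lebesgue volume of the unit ball of ℝ^d, and the integral is with respect to Lebesgue measure. -/

import Mathlib

/-!
Fix `x`, `ρ > 0` and write `D = diam ∂φ(B(x, ρ))`. For `g ∈ ∂φ(y)` with `y ∈ B(x, ρ)` and a unit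
vector `e`, let `p` be the projection of `y` on the line `x + ℝe` and `h ∈ ∂φ(p)`. The Bregman gap
`φ p - φ y - ⟪g, p - y⟫ ≤ ⟪h - g, p - y⟫` is at most `ρ D`, and increments of the convex function
`t ↦ φ (x + t e)` are monotone, so `ζ ⟪g, e⟫ ≤ φ(x + (ρ + ζ)e) - φ(x + ρe) + ρ D`. Applying this to
`±eᵢ` and summing over the coordinates with `ζ = 4dρ` gives `D ≤ Σᵢ Sᵢ(x)/ζ + D/2`, where `Sᵢ` is a
second difference of `φ` in the direction `eᵢ`.

A second difference is the difference of two translates of the bounded function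
`φ(· + ζeᵢ) - φ`, so its integral over `B(0, R)` is at most `2 Lip(φ) ζ` times the volume of an
annulus of width `2ρ + ζ`. Together with `D^q ≤ (2 Lip(φ))^(q-1) D` this gives the bound when `R`
is large compared to `dη`; for small `R` the trivial bound `D ≤ 2 Lip(φ)` suffices.
-/

open Metric Set MeasureTheory

/-- The subdifferential of `φ` at `x`. -/
def subdiff {d : ℕ} (φ : EuclideanSpace ℝ (Fin d) → ℝ) (x : EuclideanSpace ℝ (Fin d)) :
    Set (EuclideanSpace ℝ (Fin d)) :=
  {g | ∀ y, φ x + (inner ℝ g (y - x) : ℝ) ≤ φ y}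

/-- The image of a set `A` by the subdifferential of `φ`: `∂φ(A) = ⋃_{x ∈ A} ∂φ(x)`. -/
def subdiffSet {d : ℕ} (φ : EuclideanSpace ℝ (Fin d) → ℝ) (A : Set (EuclideanSpace ℝ (Fin d))) :
    Set (EuclideanSpace ℝ (Fin d)) :=
  ⋃ x ∈ A, subdiff φ x

open Module

section Convex

variable {E : Type*} [NormedAddCommGroup E] [InnerProductSpace ℝ E] {φ : E → ℝ}

theorem ConvexOn.exists_subgradient [CompleteSpace E] (hconv : ConvexOn ℝ univ φ)
    (hcont : Continuous φ) (x : E) : ∃ g : E, ∀ y, φ x + inner ℝ g (y - x) ≤ φ y := by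
  -- Separate `(x, φ x)` from the open strict epigraph; the separating functional has a negative
  -- vertical component `c`, and its horizontal part divided by `-c` is a subgradient.
  obtain ⟨f, hf⟩ := geometric_hahn_banach_open_point hconv.convex_strict_epigraph
    (isOpen_univ.preimage continuous_fst |>.inter
      (isOpen_lt (hcont.comp continuous_fst) continuous_snd)) (x := (x, φ x)) (by simp)
  set c := f (0, 1)
  have hf_apply : ∀ u t, f (u, t) = f (u, 0) + c * t := fun u t => by
    rw [show (u, t) = (u, 0) + t • ((0 : E), (1 : ℝ)) by simp, map_add, map_smul, smul_eq_mul,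
      mul_comm]
  have hc : c < 0 := by
    have := hf (x, φ x + 1) (by simp)
    rw [hf_apply x (φ x + 1), hf_apply x (φ x)] at this
    linarith
  have hsep : ∀ y, f (y, 0) - f (x, 0) ≤ c * (φ x - φ y) := fun y => by
    refine le_of_forall_pos_lt_add fun ε hε => ?_
    have hδ : 0 < ε / -c := div_pos hε (neg_pos.2 hc)
    have := hf (y, φ y + ε / -c) (by simpa using hδ)
    rw [hf_apply y, hf_apply x (φ x), mul_add, mul_div_assoc', div_neg,
      mul_div_cancel_left₀ _ hc.ne] at this
    linarith
  refine ⟨(InnerProductSpace.toDual ℝ E).symm ((-c)⁻¹ • f.comp (.inl ℝ E ℝ)), fun y => ?_⟩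
  have hfy : f (y - x, 0) = f (y, 0) - f (x, 0) := by
    rw [← map_sub, Prod.mk_sub_mk, sub_zero]
  rw [InnerProductSpace.toDual_symm_apply, smul_apply, ContinuousLinearMap.comp_apply,
    ContinuousLinearMap.inl_apply, hfy, smul_eq_mul]
  calc φ x + (-c)⁻¹ * (f (y, 0) - f (x, 0)) ≤ φ x + (-c)⁻¹ * (c * (φ x - φ y)) := by
        gcongr
        · exact inv_nonneg.2 (by linarith)
        · exact hsep y
    _ = φ y := by field_simp [hc.ne]; ring

theorem ConvexOn.increment_le_increment {f : ℝ → ℝ} (hf : ConvexOn ℝ univ f) {a b ζ : ℝ}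
    (hab : a ≤ b) (hζ : 0 ≤ ζ) : f (a + ζ) - f a ≤ f (b + ζ) - f b := by
  rcases hζ.eq_or_lt with rfl | hζ
  · simp
  have h₁ : slope f a (a + ζ) ≤ slope f a (b + ζ) :=
    hf.slope_mono (mem_univ a) ⟨mem_univ _, by simp [hζ.ne']⟩ ⟨mem_univ _, by simp; linarith⟩
      (by linarith)
  have h₂ : slope f (b + ζ) a ≤ slope f (b + ζ) b :=
    hf.slope_mono (mem_univ _) ⟨mem_univ _, by simp; linarith⟩ ⟨mem_univ _, by simp; linarith⟩ hab
  rw [slope_comm f (b + ζ), slope_comm f (b + ζ)] at h₂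
  have := h₁.trans h₂
  rwa [slope_def_field, slope_def_field, add_sub_cancel_left, add_sub_cancel_left,
    div_le_div_iff_of_pos_right hζ] at this

theorem ConvexOn.comp_add_smul (hconv : ConvexOn ℝ univ φ) (x v : E) :
    ConvexOn ℝ univ fun t : ℝ => φ (x + t • v) := by
  have := hconv.comp_affineMap (AffineMap.lineMap x (x + v))
  simpa [Function.comp_def, AffineMap.lineMap_apply_module', add_comm] using this

end Convex

def secondDiff {E : Type*} [AddCommGroup E] [Module ℝ E] (φ : E → ℝ) (x v : E) (ρ ζ : ℝ) : ℝ :=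
  φ (x + (ρ + ζ) • v) - φ (x + ρ • v) + (φ (x - (ρ + ζ) • v) - φ (x - ρ • v))

theorem continuous_secondDiff {E : Type*} [NormedAddCommGroup E] [NormedSpace ℝ E] {φ : E → ℝ}
    (hφ : Continuous φ) (v : E) (ρ ζ : ℝ) : Continuous fun x => secondDiff φ x v ρ ζ := by
  unfold secondDiff
  fun_prop

theorem setIntegral_sub_setIntegral_le {X : Type*} [MeasurableSpace X] {μ : Measure X}
    {f : X → ℝ} {s t : Set X} {M : ℝ} (hs : MeasurableSet s) (ht : MeasurableSet t)
    (hμs : μ s ≠ ⊤) (hμt : μ t ≠ ⊤) (hfs : IntegrableOn f s μ) (hft : IntegrableOn f t μ)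
    (hM : ∀ x, |f x| ≤ M) :
    ∫ x in s, f x ∂μ - ∫ x in t, f x ∂μ ≤ M * (μ.real (s \ t) + μ.real (t \ s)) := by
  have hbound : ∀ u v : Set X, μ u ≠ ⊤ → |∫ x in u \ v, f x ∂μ| ≤ M * μ.real (u \ v) :=
    fun u v hμu => by
      simpa only [Real.norm_eq_abs] using norm_setIntegral_le_of_norm_le_const
        ((measure_mono sdiff_subset).trans_lt hμu.lt_top) fun x _ =>
          (Real.norm_eq_abs _).trans_le (hM x)
  rw [← integral_inter_add_sdiff ht hfs, ← integral_inter_add_sdiff hs hft, inter_comm t s]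
  have h₁ := (abs_le.1 (hbound s t hμs)).2
  have h₂ := (abs_le.1 (hbound t s hμt)).1
  linarith

theorem setIntegral_closedBall_comp_add_right {E : Type*} [NormedAddCommGroup E]
    [MeasurableSpace E] [BorelSpace E] (μ : Measure E) [μ.IsAddRightInvariant] (f : E → ℝ)
    (v : E) (R : ℝ) : ∫ x in closedBall 0 R, f (x + v) ∂μ = ∫ x in closedBall v R, f x ∂μ := by
  have := (measurePreserving_add_right μ v).setIntegral_preimage_emb
    (measurableEmbedding_addRight v) f (closedBall v R)
  rwa [preimage_add_right_closedBall, sub_self] at this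

section AddHaar

variable {E : Type*} [NormedAddCommGroup E] [NormedSpace ℝ E] [MeasurableSpace E] [BorelSpace E]
  [FiniteDimensional ℝ E] (μ : Measure E) [μ.IsAddHaarMeasure]

theorem measureReal_closedBall_sdiff_closedBall_le (c c' : E) {R : ℝ} (hR : 0 ≤ R) :
    μ.real (closedBall c R \ closedBall c' R) ≤
      ((R + dist c c') ^ finrank ℝ E - R ^ finrank ℝ E) * μ.real (ball 0 1) := by
  have hR' : R ≤ R + dist c c' := le_add_of_nonneg_right dist_nonneg
  calc μ.real (closedBall c R \ closedBall c' R)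
      ≤ μ.real (closedBall c' (R + dist c c') \ closedBall c' R) :=
        measureReal_mono (sdiff_subset_sdiff_left (closedBall_subset_closedBall' le_rfl))
          (measure_ne_top_of_subset sdiff_subset measure_closedBall_lt_top.ne)
    _ = _ := by
      rw [measureReal_sdiff (closedBall_subset_closedBall hR') measurableSet_closedBall
          measure_closedBall_lt_top.ne, Measure.addHaar_real_closedBall μ _ (hR.trans hR'),
        Measure.addHaar_real_closedBall μ _ hR, sub_mul]

theorem setIntegral_secondDiff_le {L : NNReal} {φ : E → ℝ} (hlip : LipschitzWith L φ) {v : E}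
    (hv : ‖v‖ = 1) {ρ ζ R : ℝ} (hρ : 0 ≤ ρ) (hζ : 0 ≤ ζ) (hR : 0 ≤ R) :
    ∫ x in closedBall 0 R, secondDiff φ x v ρ ζ ∂μ ≤
      2 * L * ζ * ((R + (2 * ρ + ζ)) ^ finrank ℝ E - R ^ finrank ℝ E) * μ.real (ball 0 1) := by
  set G : E → ℝ := fun z => φ (z + ζ • v) - φ z
  have hφ := hlip.continuous
  have hG : Continuous G := by fun_prop
  have hGle : ∀ z, |G z| ≤ L * ζ := fun z => by
    simpa [G, dist_eq_norm, norm_smul, hv, abs_of_nonneg hζ] using hlip.dist_le_mul (z + ζ • v) z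
  have hG_int : ∀ c r, IntegrableOn G (closedBall c r) μ := fun c r =>
    hG.continuousOn.integrableOn_compact (isCompact_closedBall c r)
  have hG_shift_int : ∀ w, IntegrableOn (fun x => G (x + w)) (closedBall 0 R) μ := fun w =>
    (hG.comp (continuous_add_const w)).continuousOn.integrableOn_compact (isCompact_closedBall _ _)
  have hS : ∀ x, secondDiff φ x v ρ ζ = G (x + ρ • v) - G (x + -((ρ + ζ) • v)) := fun x => by
    simp only [secondDiff, G, ← sub_eq_add_neg]
    rw [show x + ρ • v + ζ • v = x + (ρ + ζ) • v by module,
      show x - (ρ + ζ) • v + ζ • v = x - ρ • v by module]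
    ring
  have hdist : dist (ρ • v) (-((ρ + ζ) • v)) = 2 * ρ + ζ := by
    rw [dist_eq_norm, sub_neg_eq_add, ← add_smul, norm_smul, hv, mul_one, Real.norm_eq_abs,
      abs_of_nonneg (by positivity)]
    ring
  simp_rw [hS]
  rw [integral_sub (hG_shift_int _) (hG_shift_int _), setIntegral_closedBall_comp_add_right,
    setIntegral_closedBall_comp_add_right]
  calc _ ≤ L * ζ * (μ.real (closedBall (ρ • v) R \ closedBall (-((ρ + ζ) • v)) R) +
        μ.real (closedBall (-((ρ + ζ) • v)) R \ closedBall (ρ • v) R)) :=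
        setIntegral_sub_setIntegral_le measurableSet_closedBall measurableSet_closedBall
          measure_closedBall_lt_top.ne measure_closedBall_lt_top.ne (hG_int _ _) (hG_int _ _) hGle
    _ ≤ L * ζ * (((R + (2 * ρ + ζ)) ^ finrank ℝ E - R ^ finrank ℝ E) * μ.real (ball 0 1) +
        ((R + (2 * ρ + ζ)) ^ finrank ℝ E - R ^ finrank ℝ E) * μ.real (ball 0 1)) := by
        gcongr
        · rw [← hdist]
          exact measureReal_closedBall_sdiff_closedBall_le μ _ _ hR
        · rw [← hdist, dist_comm]
          exact measureReal_closedBall_sdiff_closedBall_le μ _ _ hR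
    _ = _ := by ring

end AddHaar

theorem EuclideanSpace.norm_le_sum_abs {ι : Type*} [Fintype ι] (w : EuclideanSpace ℝ ι) :
    ‖w‖ ≤ ∑ i, |w i| := by
  conv_lhs => rw [← (EuclideanSpace.basisFun ι ℝ).sum_repr w]
  refine (norm_sum_le _ _).trans (le_of_eq ?_)
  simp [norm_smul]

theorem rpow_le_rpow_sub_one_mul {D c q : ℝ} (hD : 0 ≤ D) (hDc : D ≤ c) (hq : 1 ≤ q) :
    D ^ q ≤ c ^ (q - 1) * D := by
  calc D ^ q = D ^ (q - 1) * D := by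
        rw [← Real.rpow_add_one' hD (by linarith), sub_add_cancel]
    _ ≤ c ^ (q - 1) * D := by gcongr

theorem pow_sub_pow_le_mul {a b : ℝ} (hb : 0 ≤ b) (hba : b ≤ a) (n : ℕ) :
    a ^ n - b ^ n ≤ (a - b) * n * a ^ (n - 1) := by
  have := (le_abs_self _).trans (abs_pow_sub_pow_le a b n)
  rwa [abs_of_nonneg (sub_nonneg.2 hba), abs_of_nonneg (hb.trans hba), abs_of_nonneg hb,
    max_eq_left hba] at this

theorem natCast_mul_two_pow_le (d : ℕ) : (d : ℝ) * 2 ^ (d - 1) ≤ 2 * 8 ^ d :=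
  calc (d : ℝ) * 2 ^ (d - 1) ≤ 2 ^ d * 2 ^ d := by
        gcongr
        · exact_mod_cast Nat.lt_two_pow_self.le
        · norm_num
        · exact Nat.sub_le d 1
    _ = 4 ^ d := by rw [← mul_pow]; norm_num
    _ ≤ 8 ^ d := pow_le_pow_left₀ (by norm_num) (by norm_num) d
    _ ≤ 2 * 8 ^ d := by linarith [pow_nonneg (by norm_num : (0 : ℝ) ≤ 8) d]

theorem pow_le_of_le_six_mul {d : ℕ} {R η : ℝ} (hR : 0 < R) (hη : 0 < η)
    (hsmall : R ≤ 6 * d * η) : R ^ d ≤ 24 * d ^ 2 * 8 ^ d * η * (R + 4 * η) ^ (d - 1) := by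
  have hd : 1 ≤ d := by
    by_contra! h
    simp [Nat.lt_one_iff.1 h] at hsmall
    linarith
  have hd' : (1 : ℝ) ≤ d := by exact_mod_cast hd
  have h8 : (1 : ℝ) ≤ 8 ^ d := one_le_pow₀ (by norm_num)
  calc R ^ d = R ^ (d - 1) * R := by rw [← pow_succ, Nat.sub_add_cancel hd]
    _ ≤ (R + 4 * η) ^ (d - 1) * (6 * d * η) := by gcongr; linarith
    _ = 6 * d * (η * (R + 4 * η) ^ (d - 1)) := by ring
    _ ≤ 24 * d ^ 2 * 8 ^ d * (η * (R + 4 * η) ^ (d - 1)) := by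
      refine mul_le_mul_of_nonneg_right ?_ (by positivity)
      nlinarith [one_le_mul_of_one_le_of_one_le hd' h8]
    _ = 24 * d ^ 2 * 8 ^ d * η * (R + 4 * η) ^ (d - 1) := by ring

theorem mul_pow_sub_pow_le_of_six_mul_lt {d : ℕ} {R η : ℝ} (hη : 0 < η)
    (hlarge : 6 * d * η < R) :
    2 * d * ((R + (2 + 4 * d) * η) ^ d - R ^ d) ≤
      24 * d ^ 2 * 8 ^ d * η * (R + 4 * η) ^ (d - 1) := by
  have hR : 0 < R := lt_of_le_of_lt (by positivity) hlarge
  set τ := (2 + 4 * (d : ℝ)) * η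
  have hτ : 0 ≤ τ := by positivity
  have hpow : (R + τ) ^ (d - 1) ≤ 2 ^ (d - 1) * (R + 4 * η) ^ (d - 1) := by
    rw [← mul_pow]
    gcongr
    simp only [τ]
    nlinarith
  have hdτ : d * τ ≤ 6 * d ^ 2 * η := by
    have : (d : ℝ) ≤ d ^ 2 := by exact_mod_cast Nat.le_self_pow two_ne_zero d
    simp only [τ]
    nlinarith [mul_le_mul_of_nonneg_right this hη.le]
  have hdiff := pow_sub_pow_le_mul hR.le (le_add_of_nonneg_right hτ) d
  rw [add_sub_cancel_left] at hdiff
  calc 2 * d * ((R + τ) ^ d - R ^ d)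
      ≤ 2 * d * (τ * d * (2 ^ (d - 1) * (R + 4 * η) ^ (d - 1))) := by
        gcongr
        exact hdiff.trans (by gcongr)
    _ = 2 * (d * τ) * (d * 2 ^ (d - 1)) * (R + 4 * η) ^ (d - 1) := by ring
    _ ≤ 2 * (6 * d ^ 2 * η) * (2 * 8 ^ d) * (R + 4 * η) ^ (d - 1) := by
        gcongr 2 * ?_ * ?_ * _
        exact natCast_mul_two_pow_le d
    _ = 24 * d ^ 2 * 8 ^ d * η * (R + 4 * η) ^ (d - 1) := by ring

theorem min_pow_annulus_le (d : ℕ) {R η : ℝ} (hR : 0 < R) (hη : 0 < η) :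
    min (R ^ d) (2 * d * ((R + (2 + 4 * d) * η) ^ d - R ^ d)) ≤
      24 * d ^ 2 * 8 ^ d * η * (R + 4 * η) ^ (d - 1) := by
  rcases le_or_gt R (6 * d * η) with hsmall | hlarge
  · exact (min_le_left _ _).trans (pow_le_of_le_six_mul hR hη hsmall)
  · exact (min_le_right _ _).trans (mul_pow_sub_pow_le_of_six_mul_lt hη hlarge)

section Subdifferential

variable {d : ℕ} {L : NNReal} {φ : EuclideanSpace ℝ (Fin d) → ℝ}

theorem norm_le_of_mem_subdiff (hlip : LipschitzWith L φ) {x g : EuclideanSpace ℝ (Fin d)}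
    (hg : g ∈ subdiff φ x) : ‖g‖ ≤ L := by
  have hinc : ‖g‖ ^ 2 ≤ φ (x + g) - φ x := by
    have := hg (x + g)
    rw [add_sub_cancel_left, real_inner_self_eq_norm_sq] at this
    linarith
  have hlip' : φ (x + g) - φ x ≤ L * ‖g‖ := by
    simpa [dist_eq_norm] using (le_abs_self _).trans (hlip.dist_le_mul (x + g) x)
  nlinarith [norm_nonneg g]

theorem subdiffSet_subset_closedBall (hlip : LipschitzWith L φ)
    (A : Set (EuclideanSpace ℝ (Fin d))) : subdiffSet φ A ⊆ closedBall 0 L := by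
  simp only [subdiffSet, iUnion_subset_iff]
  exact fun x _ g hg => mem_closedBall_zero_iff.2 (norm_le_of_mem_subdiff hlip hg)

theorem diam_subdiffSet_le (hlip : LipschitzWith L φ) (A : Set (EuclideanSpace ℝ (Fin d))) :
    diam (subdiffSet φ A) ≤ 2 * L :=
  (diam_mono (subdiffSet_subset_closedBall hlip A) isBounded_closedBall).trans
    (diam_closedBall L.2)

theorem mul_inner_le_increment_add_diam (hconv : ConvexOn ℝ univ φ) (hlip : LipschitzWith L φ)
    {x y g e : EuclideanSpace ℝ (Fin d)} {ρ ζ : ℝ} (hy : y ∈ closedBall x ρ)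
    (hg : g ∈ subdiff φ y) (he : ‖e‖ = 1) (hζ : 0 ≤ ζ) :
    ζ * inner ℝ g e ≤
      φ (x + (ρ + ζ) • e) - φ (x + ρ • e) + ρ * diam (subdiffSet φ (closedBall x ρ)) := by
  set a := inner ℝ (y - x) e
  set p := x + a • e
  have hyx : ‖y - x‖ ≤ ρ := mem_closedBall_iff_norm.1 hy
  have ha : |a| ≤ ρ := (abs_real_inner_le_norm _ _).trans (by rwa [he, mul_one])
  have hp : p ∈ closedBall x ρ := by
    rwa [mem_closedBall_iff_norm, add_sub_cancel_left, norm_smul, he, mul_one, Real.norm_eq_abs]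
  have hpy : ‖p - y‖ ≤ ρ := by
    have : ‖p - y‖ ^ 2 = ‖y - x‖ ^ 2 - a ^ 2 := by
      rw [show p - y = a • e - (y - x) by simp only [p]; abel, norm_sub_sq_real,
        real_inner_smul_left, real_inner_comm, norm_smul, he, Real.norm_eq_abs, mul_one, sq_abs]
      ring
    have hρ : 0 ≤ ρ := (norm_nonneg _).trans hyx
    refine (pow_le_pow_iff_left₀ (norm_nonneg _) hρ two_ne_zero).1 ?_
    rw [this]
    nlinarith [pow_le_pow_left₀ (norm_nonneg _) hyx 2, sq_nonneg a]
  obtain ⟨h, hh⟩ := hconv.exists_subgradient hlip.continuous p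
  have hbregman : φ p - φ y - inner ℝ g (p - y) ≤ ρ * diam (subdiffSet φ (closedBall x ρ)) := by
    have hgh : ‖h - g‖ ≤ diam (subdiffSet φ (closedBall x ρ)) := by
      rw [← dist_eq_norm]
      exact dist_le_diam_of_mem (isBounded_closedBall.subset (subdiffSet_subset_closedBall hlip _))
        (mem_biUnion hp hh) (mem_biUnion hy hg)
    have hhy := hh y
    rw [← neg_sub p y, inner_neg_right] at hhy
    calc φ p - φ y - inner ℝ g (p - y) ≤ inner ℝ (h - g) (p - y) := by
          rw [inner_sub_left]; linarith
      _ ≤ ‖h - g‖ * ‖p - y‖ := real_inner_le_norm _ _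
      _ ≤ _ := by rw [mul_comm]; gcongr; exact (norm_nonneg _).trans hyx
  have hincr := (hconv.comp_add_smul x e).increment_le_increment (le_of_abs_le ha) hζ
  have hsub := hg (p + ζ • e)
  rw [show p + ζ • e - y = p - y + ζ • e by abel, inner_add_right, real_inner_smul_right,
    show p + ζ • e = x + (a + ζ) • e by rw [add_smul, add_assoc]] at hsub
  linarith

theorem mul_sub_apply_le_secondDiff (hconv : ConvexOn ℝ univ φ) (hlip : LipschitzWith L φ)
    {x y y' g g' : EuclideanSpace ℝ (Fin d)} {ρ ζ : ℝ} (hy : y ∈ closedBall x ρ)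
    (hy' : y' ∈ closedBall x ρ) (hg : g ∈ subdiff φ y) (hg' : g' ∈ subdiff φ y') (hζ : 0 ≤ ζ)
    (i : Fin d) :
    ζ * (g i - g' i) ≤ secondDiff φ x (EuclideanSpace.single i 1) ρ ζ +
      2 * ρ * diam (subdiffSet φ (closedBall x ρ)) := by
  have he : ‖EuclideanSpace.single i (1 : ℝ)‖ = 1 := by simp
  have h₁ := mul_inner_le_increment_add_diam hconv hlip hy hg he hζ
  have h₂ := mul_inner_le_increment_add_diam hconv hlip hy' hg' (by rwa [norm_neg]) hζ
  simp only [smul_neg, ← sub_eq_add_neg, inner_neg_right, EuclideanSpace.inner_single_right,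
    one_mul, conj_trivial] at h₁ h₂
  rw [secondDiff]
  linarith

theorem diam_subdiffSet_closedBall_le (hconv : ConvexOn ℝ univ φ) (hlip : LipschitzWith L φ)
    (x : EuclideanSpace ℝ (Fin d)) {ρ : ℝ} (hρ : 0 < ρ) :
    diam (subdiffSet φ (closedBall x ρ)) ≤
      2 * ∑ i, secondDiff φ x (EuclideanSpace.single i 1) ρ (4 * d * ρ) / (4 * d * ρ) := by
  set D := diam (subdiffSet φ (closedBall x ρ))
  set S := fun i => secondDiff φ x (EuclideanSpace.single i 1) ρ (4 * d * ρ)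
  suffices D ≤ ∑ i, S i / (4 * d * ρ) + D / 2 by linarith
  have hD : 0 ≤ D := diam_nonneg
  have hζ : 0 ≤ 4 * (d : ℝ) * ρ := by positivity
  obtain ⟨g₀, hg₀⟩ := hconv.exists_subgradient hlip.continuous x
  refine diam_le_of_forall_dist_le_of_nonempty
    ⟨g₀, mem_biUnion (mem_closedBall_self hρ.le) (show g₀ ∈ subdiff φ x from hg₀)⟩ ?_
  simp only [mem_iUnion₂]
  rintro g ⟨y, hy, hg⟩ g' ⟨y', hy', hg'⟩
  have hcoord : ∀ i, |g i - g' i| ≤ (S i + 2 * ρ * D) / (4 * d * ρ) := fun i => by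
    have hd : (0 : ℝ) < d := by exact_mod_cast i.pos
    have h₁ := mul_sub_apply_le_secondDiff hconv hlip hy hy' hg hg' hζ i
    have h₂ := mul_sub_apply_le_secondDiff hconv hlip hy' hy hg' hg hζ i
    rw [le_div_iff₀ (by positivity), mul_comm, ← abs_of_nonneg hζ, ← abs_mul, abs_le]
    constructor <;> linarith
  have hsum : (d : ℝ) * (2 * ρ * D / (4 * d * ρ)) ≤ D / 2 := by
    rcases eq_or_ne d 0 with rfl | hd
    -- for `d = 0` the left side is `0 * (_ / 0) = 0`
    · simp; positivity
    · exact le_of_eq (by field_simp; ring)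
  calc dist g g' = ‖g - g'‖ := dist_eq_norm g g'
    _ ≤ ∑ i, |g i - g' i| := EuclideanSpace.norm_le_sum_abs (g - g')
    _ ≤ ∑ i, (S i + 2 * ρ * D) / (4 * d * ρ) := Finset.sum_le_sum fun i _ => hcoord i
    _ = ∑ i, S i / (4 * d * ρ) + d * (2 * ρ * D / (4 * d * ρ)) := by
      simp [add_div, Finset.sum_add_distrib]
    _ ≤ ∑ i, S i / (4 * d * ρ) + D / 2 := by linarith

theorem setIntegral_diam_subdiffSet_rpow_le_ball (hlip : LipschitzWith L φ) {q : ℝ}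
    (hq : 0 ≤ q) (η : ℝ) {R : ℝ} (hR : 0 ≤ R) :
    ∫ x in closedBall (0 : EuclideanSpace ℝ (Fin d)) R, diam (subdiffSet φ (closedBall x η)) ^ q ≤
      (2 * L) ^ q * volume.real (ball (0 : EuclideanSpace ℝ (Fin d)) 1) * R ^ d := by
  calc _ ≤ ‖∫ x in closedBall (0 : EuclideanSpace ℝ (Fin d)) R,
          diam (subdiffSet φ (closedBall x η)) ^ q‖ := Real.le_norm_self _
    _ ≤ (2 * L) ^ q * volume.real (closedBall (0 : EuclideanSpace ℝ (Fin d)) R) :=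
        norm_setIntegral_le_of_norm_le_const measure_closedBall_lt_top fun x _ => by
          rw [Real.norm_of_nonneg (by positivity)]
          exact Real.rpow_le_rpow diam_nonneg (diam_subdiffSet_le hlip _) hq
    _ = _ := by rw [Measure.addHaar_real_closedBall _ _ hR, finrank_euclideanSpace_fin]; ring

theorem setIntegral_diam_subdiffSet_rpow_le_annulus (hconv : ConvexOn ℝ univ φ)
    (hlip : LipschitzWith L φ) {q : ℝ} (hq : 1 ≤ q) {η : ℝ} (hη : 0 < η) {R : ℝ} (hR : 0 ≤ R) :
    ∫ x in closedBall (0 : EuclideanSpace ℝ (Fin d)) R, diam (subdiffSet φ (closedBall x η)) ^ q ≤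
      (2 * L) ^ q * volume.real (ball (0 : EuclideanSpace ℝ (Fin d)) 1) *
        (2 * d * ((R + (2 + 4 * d) * η) ^ d - R ^ d)) := by
  set V := volume.real (ball (0 : EuclideanSpace ℝ (Fin d)) 1)
  set ζ := 4 * (d : ℝ) * η
  set S := fun i x => secondDiff φ x (EuclideanSpace.single i (1 : ℝ)) η ζ
  have hS_int : ∀ i, IntegrableOn (S i) (closedBall 0 R) :=
    fun i => (continuous_secondDiff hlip.continuous _ _ _).continuousOn.integrableOn_compact
      (isCompact_closedBall _ _)
  have hS : ∀ i, ∫ x in closedBall 0 R, S i x / ζ ≤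
      2 * L * ((R + (2 + 4 * d) * η) ^ d - R ^ d) * V := fun i => by
    have hd : (0 : ℝ) < d := by exact_mod_cast i.pos
    have hζ : 0 < ζ := by positivity
    have := setIntegral_secondDiff_le volume hlip (v := EuclideanSpace.single i (1 : ℝ))
      (by simp) hη.le hζ.le hR
    rw [finrank_euclideanSpace_fin, show R + (2 * η + ζ) = R + (2 + 4 * d) * η by ring] at this
    rw [integral_div, div_le_iff₀ hζ]
    linarith
  have hpow : (2 * (L : ℝ)) ^ q = (2 * L) ^ (q - 1) * (2 * L) := by
    rw [← Real.rpow_add_one' (by positivity) (by linarith), sub_add_cancel]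
  calc ∫ x in closedBall 0 R, diam (subdiffSet φ (closedBall x η)) ^ q
      ≤ ∫ x in closedBall 0 R, (2 * (L : ℝ)) ^ (q - 1) * (2 * ∑ i, S i x / ζ) := by
        refine integral_mono_of_nonneg (.of_forall fun x => by positivity)
          ((integrable_finsetSum _ fun i _ => (hS_int i).div_const ζ).const_mul 2 |>.const_mul _)
          (.of_forall fun x => ?_)
        exact (rpow_le_rpow_sub_one_mul diam_nonneg (diam_subdiffSet_le hlip _) hq).trans <|
          mul_le_mul_of_nonneg_left (diam_subdiffSet_closedBall_le hconv hlip x hη) (by positivity)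
    _ = (2 * (L : ℝ)) ^ (q - 1) * (2 * ∑ i, ∫ x in closedBall 0 R, S i x / ζ) := by
        rw [integral_const_mul, integral_const_mul,
          integral_finsetSum _ fun i _ => (hS_int i).div_const ζ]
    _ ≤ (2 * (L : ℝ)) ^ (q - 1) * (2 * ∑ _i : Fin d,
          2 * L * ((R + (2 + 4 * d) * η) ^ d - R ^ d) * V) := by
        gcongr with i
        exact hS i
    _ = (2 * L) ^ q * V * (2 * d * ((R + (2 + 4 * d) * η) ^ d - R ^ d)) := by
        rw [Finset.sum_const, Finset.card_univ, Fintype.card_fin, nsmul_eq_mul, hpow]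
        ring

end Subdifferential

/-- integral bound on near-singularities of a convex Lipschitz function:
for `η, R > 0`, `q > 1`,
`∫_{B(0,R)} diam(∂φ(B(x,η)))^q dx ≤ 48 d² β_d 2^(3d+q-1) (q/(q-1)) (R+4η)^(d-1) Lip(φ)^q η`. -/
theorem integral_diam_subdiff_le (d : ℕ) (L : NNReal) (φ : EuclideanSpace ℝ (Fin d) → ℝ)
    (hconv : ConvexOn ℝ Set.univ φ) (hlip : LipschitzWith L φ)
    (η R q : ℝ) (hη : 0 < η) (hR : 0 < R) (hq : 1 < q) :
    ∫ x in closedBall (0 : EuclideanSpace ℝ (Fin d)) R,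
        Metric.diam (subdiffSet φ (closedBall x η)) ^ q ≤
      48 * (d : ℝ) ^ 2 * (volume (ball (0 : EuclideanSpace ℝ (Fin d)) 1)).toReal *
        2 ^ (3 * (d : ℝ) + q - 1) * (q / (q - 1)) * (R + 4 * η) ^ (d - 1) *
        (L : ℝ) ^ q * η := by
  rw [← measureReal_def]
  set V := volume.real (ball (0 : EuclideanSpace ℝ (Fin d)) 1)
  have hQ : 0 ≤ (2 * (L : ℝ)) ^ q * V := by positivity
  have h2 : (2 : ℝ) ^ (3 * (d : ℝ) + q - 1) = 8 ^ d * 2 ^ q / 2 := by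
    rw [Real.rpow_sub two_pos, Real.rpow_add two_pos, Real.rpow_one,
      show (3 * (d : ℝ)) = ((3 * d : ℕ) : ℝ) by push_cast; ring, Real.rpow_natCast, pow_mul]
    norm_num
  calc ∫ x in closedBall 0 R, diam (subdiffSet φ (closedBall x η)) ^ q
      ≤ (2 * L) ^ q * V * min (R ^ d) (2 * d * ((R + (2 + 4 * d) * η) ^ d - R ^ d)) := by
        rw [mul_min_of_nonneg _ _ hQ]
        exact le_min (setIntegral_diam_subdiffSet_rpow_le_ball hlip (by linarith) η hR.le)
          (setIntegral_diam_subdiffSet_rpow_le_annulus hconv hlip hq.le hη hR.le)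
    _ ≤ (2 * L) ^ q * V * (24 * d ^ 2 * 8 ^ d * η * (R + 4 * η) ^ (d - 1)) := by
        gcongr
        exact min_pow_annulus_le d hR hη
    _ ≤ (2 * L) ^ q * V * (24 * d ^ 2 * 8 ^ d * η * (R + 4 * η) ^ (d - 1)) * (q / (q - 1)) :=
        le_mul_of_one_le_right (by positivity) ((one_le_div (by linarith)).2 (by linarith))
    _ = _ := by
        rw [h2, Real.mul_rpow zero_le_two L.coe_nonneg]
        ring
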